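/- The free group of countably infinite rank is bi-orderable: the Magnus ordering, defined by comparing the lexicographically smallest differing terms (with respect to a shortlex order on monomials induced by a total order on the variables) of the Magnus expansions of group elements, is a total order on F_∞ invariant under left and right multiplication. -/

import Mathlib

open Classical in
/-- The ring of formal power series over `ℤ` in non-commuting variables indexed by `X`:
coefficient functions on the free monoid of monomials, with convolution product. -/
def NCSeries (X : Type*) : Type _ := FreeMonoid X → ℤ

namespace NCSeries

variable {X : Type*}

instance : AddCommGroup (NCSeries X) := inferInstanceAs (AddCommGroup (FreeMonoid X → ℤ))

open Classical in
noncomputable instance : One (NCSeries X) := ⟨fun w => if w = 1 then 1 else 0⟩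

instance : Mul (NCSeries X) :=
  ⟨fun f g w => ∑ i ∈ Finset.range ((FreeMonoid.toList w).length + 1),
    f (FreeMonoid.ofList ((FreeMonoid.toList w).take i)) *
      g (FreeMonoid.ofList ((FreeMonoid.toList w).drop i))⟩

theorem mul_apply (f g : NCSeries X) (w : FreeMonoid X) :
    (f * g) w = ∑ i ∈ Finset.range ((FreeMonoid.toList w).length + 1),
      f (FreeMonoid.ofList ((FreeMonoid.toList w).take i)) *
        g (FreeMonoid.ofList ((FreeMonoid.toList w).drop i)) := rfl

open Classical in
theorem one_apply (w : FreeMonoid X) : (1 : NCSeries X) w = if w = 1 then 1 else 0 := rfl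

theorem add_apply (f g : NCSeries X) (w : FreeMonoid X) : (f + g) w = f w + g w := rfl

theorem zero_apply (w : FreeMonoid X) : (0 : NCSeries X) w = 0 := rfl

theorem ofList_eq_one_iff (l : List X) : FreeMonoid.ofList l = 1 ↔ l = [] := by
  constructor
  · intro h; simpa using congrArg FreeMonoid.toList h
  · rintro rfl; rfl

noncomputable instance : Ring (NCSeries X) where
  __ := (inferInstance : AddCommGroup (NCSeries X))
  one_mul f := by
    funext w
    rw [mul_apply, Finset.sum_eq_single 0]
    · simp [one_apply, ofList_eq_one_iff]
    · intro b hb hb0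
      have : ¬ ((FreeMonoid.toList w).take b = []) := by
        rw [List.take_eq_nil_iff]
        rw [Finset.mem_range] at hb
        rintro (rfl | hnil)
        · exact hb0 rfl
        · simp [hnil] at hb; omega
      rw [one_apply, if_neg, zero_mul]
      rw [ofList_eq_one_iff]; exact this
    · intro h0; exact absurd (Finset.mem_range.2 (Nat.succ_pos _)) h0
  mul_one f := by
    funext w
    rw [mul_apply, Finset.sum_eq_single ((FreeMonoid.toList w).length)]
    · simp [one_apply, ofList_eq_one_iff]
    · intro b hb hb'
      rw [Finset.mem_range] at hb
      rw [one_apply, if_neg, mul_zero]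
      rw [ofList_eq_one_iff, List.drop_eq_nil_iff]
      omega
    · intro h0; exact absurd (Finset.mem_range.2 (Nat.lt_succ_self _)) h0
  mul_assoc f g h := by
    funext w
    set l := FreeMonoid.toList w with hl
    have key : ∀ j ∈ Finset.range (l.length + 1),
        (f * g) (FreeMonoid.ofList (l.take j)) * h (FreeMonoid.ofList (l.drop j)) =
        ∑ i ∈ Finset.range (j + 1),
          f (FreeMonoid.ofList (l.take i)) *
            g (FreeMonoid.ofList ((l.drop i).take (j - i))) *
            h (FreeMonoid.ofList (l.drop j)) := by
      intro j hj
      rw [Finset.mem_range] at hj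
      rw [mul_apply, Finset.sum_mul]
      simp only [FreeMonoid.toList_ofList]
      rw [List.length_take, min_eq_left (by omega)]
      refine Finset.sum_congr rfl fun i hi => ?_
      rw [Finset.mem_range] at hi
      rw [List.take_take, min_eq_left (by omega), List.drop_take]
    have key2 : ∀ i ∈ Finset.range (l.length + 1),
        f (FreeMonoid.ofList (l.take i)) * (g * h) (FreeMonoid.ofList (l.drop i)) =
        ∑ k ∈ Finset.range ((l.length - i) + 1),
          f (FreeMonoid.ofList (l.take i)) *
            (g (FreeMonoid.ofList ((l.drop i).take k)) *
              h (FreeMonoid.ofList (l.drop (i + k)))) := by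
      intro i hi
      rw [Finset.mem_range] at hi
      rw [mul_apply, Finset.mul_sum]
      simp only [FreeMonoid.toList_ofList]
      rw [List.length_drop]
      refine Finset.sum_congr rfl fun k hk => ?_
      rw [List.drop_drop]
    show (f * g * h) w = (f * (g * h)) w
    rw [mul_apply, Finset.sum_congr rfl key, Finset.sum_sigma']
    rw [mul_apply, Finset.sum_congr rfl key2, Finset.sum_sigma']
    refine Finset.sum_nbij' (fun p => ⟨p.2, p.1 - p.2⟩) (fun p => ⟨p.1 + p.2, p.1⟩)
      ?_ ?_ ?_ ?_ ?_
    · rintro ⟨j, i⟩ hp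
      simp only [Finset.mem_sigma, Finset.mem_range] at hp ⊢
      omega
    · rintro ⟨i, k⟩ hp
      simp only [Finset.mem_sigma, Finset.mem_range] at hp ⊢
      omega
    · rintro ⟨j, i⟩ hp
      simp only [Finset.mem_sigma, Finset.mem_range] at hp
      simp only [Sigma.mk.inj_iff, heq_eq_eq]
      exact ⟨by omega, trivial⟩
    · rintro ⟨i, k⟩ hp
      simp only [Finset.mem_sigma, Finset.mem_range] at hp
      simp only [Sigma.mk.inj_iff, heq_eq_eq]
      refine ⟨by trivial, by omega⟩
    · rintro ⟨j, i⟩ hp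
      simp only [Finset.mem_sigma, Finset.mem_range] at hp
      have hij : i + (j - i) = j := by omega
      rw [hij, mul_assoc]
  left_distrib f g h := by
    funext w
    simp only [mul_apply, add_apply, mul_add, Finset.sum_add_distrib]
  right_distrib f g h := by
    funext w
    simp only [mul_apply, add_apply, add_mul, Finset.sum_add_distrib]
  zero_mul f := by funext w; simp [mul_apply, zero_apply]
  mul_zero f := by funext w; simp [mul_apply, zero_apply]

open Classical in
/-- The variable `X_x` as a power series. -/
noncomputable def Xvar (x : X) : NCSeries X :=
  fun w => if w = FreeMonoid.of x then 1 else 0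

end NCSeries

/-- The shortlex order on monomials (elements of the free monoid) induced by an order `r`
on the variables: compare lengths first, then lexicographically. -/
def shortlex {X : Type*} (r : X → X → Prop) (u v : FreeMonoid X) : Prop :=
  (FreeMonoid.toList u).length < (FreeMonoid.toList v).length ∨
    ((FreeMonoid.toList u).length = (FreeMonoid.toList v).length ∧
      List.Lex r (FreeMonoid.toList u) (FreeMonoid.toList v))

/-- The Magnus ordering on the free group, relative to a variable order `r` and the
Magnus expansion `f`: `a ≺ b` iff at the shortlex-smallest monomial where the Magnus
expansions of `a` and `b` differ, the coefficient of `a` is smaller. -/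
def magnusLt {X : Type*} (r : X → X → Prop) (f : FreeGroup X →* (NCSeries X)ˣ)
    (a b : FreeGroup X) : Prop :=
  ∃ m : FreeMonoid X,
    ((f a : (NCSeries X)ˣ) : NCSeries X) m < ((f b : (NCSeries X)ˣ) : NCSeries X) m ∧
    ∀ m' : FreeMonoid X, shortlex r m' m →
      ((f a : (NCSeries X)ˣ) : NCSeries X) m' = ((f b : (NCSeries X)ˣ) : NCSeries X) m'


/-!
Magnus' argument. Write a nontrivial element in syllable form
`x_{i₁}^{e₁} ⋯ x_{iₖ}^{eₖ}` with consecutive `iⱼ` distinct and all `eⱼ ≠ 0`. The factor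
`(1 + X_{iⱼ})^{eⱼ}` is a power series in the single variable `X_{iⱼ}` with constant term `1` and
linear coefficient `eⱼ`, so the coefficient of the monomial `X_{i₁} ⋯ X_{iₖ}` in the expansion is
`e₁ ⋯ eₖ ≠ 0`. Hence the Magnus expansion is injective, and pulling back the lexicographic order of
`ℤ`-valued functions along the well-order shortlex gives a strict total order on the free group.
For bi-invariance, all expansions have constant term `1` and shortlex refines length, so the
coefficients of `f g * (f y - f x) * f h` agree with those of `f y - f x` up to the first monomial
where `f x` and `f y` differ.
-/

open FreeMonoid

namespace NCSeries

variable {X : Type*}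

theorem sub_apply (f g : NCSeries X) (w : FreeMonoid X) : (f - g) w = f w - g w := rfl

theorem mul_apply_ofList (f g : NCSeries X) (l : List X) :
    (f * g) (ofList l) = ∑ i ∈ Finset.range (l.length + 1),
      f (ofList (l.take i)) * g (ofList (l.drop i)) := by
  rw [mul_apply, toList_ofList]

theorem one_apply_ofList (l : List X) : (1 : NCSeries X) (ofList l) = if l = [] then 1 else 0 := by
  simp only [one_apply, ofList_eq_one_iff]

open Classical in
theorem Xvar_apply_ofList (x : X) (l : List X) : Xvar x (ofList l) = if l = [x] then 1 else 0 := by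
  simp only [Xvar, ← ofList_singleton, ofList.injective.eq_iff]

open Classical in
theorem Xvar_mul_apply_cons (x y : X) (s : NCSeries X) (l : List X) :
    (Xvar x * s) (ofList (y :: l)) = if y = x then s (ofList l) else 0 := by
  rw [mul_apply_ofList, Finset.sum_eq_single 1]
  · rw [Xvar_apply_ofList]
    simp
  · intro k hk hk1
    rw [Xvar_apply_ofList, if_neg, zero_mul]
    intro h
    have := congrArg List.length h
    simp only [List.length_take, List.length_cons, List.length_nil] at this
    simp only [Finset.mem_range, List.length_cons] at hk
    omega
  · simp

noncomputable def constantCoeff : NCSeries X →+* ℤ where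
  toFun s := s 1
  map_one' := by simp [one_apply]
  map_mul' f g := by simp [mul_apply]
  map_zero' := rfl
  map_add' _ _ := rfl

theorem constantCoeff_apply (s : NCSeries X) : constantCoeff s = s 1 := rfl

theorem mul_apply_of (f g : NCSeries X) (x : X) :
    (f * g) (FreeMonoid.of x) = f 1 * g (FreeMonoid.of x) + f (FreeMonoid.of x) * g 1 := by
  simp [mul_apply, Finset.sum_range_succ]

theorem mul_apply_of_forall_length_lt_left {u d : NCSeries X} {w : FreeMonoid X}
    (hd : ∀ b : FreeMonoid X, b.toList.length < w.toList.length → d b = 0) :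
    (u * d) w = u 1 * d w := by
  rw [mul_apply, Finset.sum_eq_single 0]
  · simp
  · intro k hk hk0
    rw [hd _ (by simp at hk ⊢; omega), mul_zero]
  · simp

theorem mul_apply_of_forall_length_lt_right {d v : NCSeries X} {w : FreeMonoid X}
    (hd : ∀ b : FreeMonoid X, b.toList.length < w.toList.length → d b = 0) :
    (d * v) w = d w * v 1 := by
  rw [mul_apply, Finset.sum_eq_single w.toList.length]
  · simp
  · intro k hk hkl
    rw [hd _ (by simp at hk ⊢; omega), zero_mul]
  · simp

theorem mul_mul_apply_of_forall_length_lt {u d v : NCSeries X} {w : FreeMonoid X}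
    (hd : ∀ b : FreeMonoid X, b.toList.length < w.toList.length → d b = 0) :
    (u * d * v) w = u 1 * d w * v 1 := by
  rw [mul_apply_of_forall_length_lt_right (d := u * d) fun b hb => ?_,
    mul_apply_of_forall_length_lt_left hd]
  rw [mul_apply_of_forall_length_lt_left fun c hc => hd c (hc.trans hb), hd b hb, mul_zero]

def SupportedOnPowers (x : X) (s : NCSeries X) : Prop :=
  ∀ l : List X, s (ofList l) ≠ 0 → ∀ y ∈ l, y = x

theorem SupportedOnPowers.apply_eq_zero {x y : X} {s : NCSeries X} {l : List X}
    (hs : SupportedOnPowers x s) (hy : y ∈ l) (hyx : y ≠ x) : s (ofList l) = 0 :=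
  by_contra fun h => hyx (hs l h y hy)

theorem supportedOnPowers_one (x : X) : SupportedOnPowers x 1 := by
  intro l hl
  rw [one_apply_ofList, ite_ne_right_iff] at hl
  simp [hl.1]

theorem SupportedOnPowers.add {x : X} {s t : NCSeries X} (hs : SupportedOnPowers x s)
    (ht : SupportedOnPowers x t) : SupportedOnPowers x (s + t) := by
  intro l hl
  rw [add_apply] at hl
  by_cases h : s (ofList l) = 0
  · exact ht l (by simpa [h] using hl)
  · exact hs l h

theorem supportedOnPowers_Xvar (x : X) : SupportedOnPowers x (Xvar x) := by
  classical
  intro l hl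
  rw [Xvar_apply_ofList, ite_ne_right_iff] at hl
  simp [hl.1]

theorem SupportedOnPowers.mul {x : X} {s t : NCSeries X} (hs : SupportedOnPowers x s)
    (ht : SupportedOnPowers x t) : SupportedOnPowers x (s * t) := by
  intro l hl y hy
  rw [mul_apply_ofList] at hl
  obtain ⟨k, -, hk⟩ := Finset.exists_ne_zero_of_sum_ne_zero hl
  rw [← List.take_append_drop k l, List.mem_append] at hy
  exact hy.elim (hs _ (left_ne_zero_of_mul hk) y) (ht _ (right_ne_zero_of_mul hk) y)

theorem supportedOnPowers_of_one_add_Xvar_mul_eq_one {x : X} {s : NCSeries X}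
    (h : (1 + Xvar x) * s = 1) : SupportedOnPowers x s := by
  have hs : s = 1 - Xvar x * s := by rw [eq_sub_iff_add_eq, ← one_add_mul, h]
  intro l
  induction l with
  | nil => simp
  | cons y l ih =>
    rw [hs, sub_apply, one_apply_ofList, if_neg (List.cons_ne_nil y l), Xvar_mul_apply_cons]
    intro hne z hz
    have hyx : y = x := by by_contra hyx; simp [hyx] at hne
    rw [if_pos hyx, zero_sub, neg_ne_zero] at hne
    exact (List.mem_cons.1 hz).elim (· ▸ hyx) (ih hne z)

def unitsSupportedOnPowers (x : X) : Subgroup (NCSeries X)ˣ where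
  carrier := {u | SupportedOnPowers x u ∧ SupportedOnPowers x ↑u⁻¹}
  mul_mem' hu hv := by
    refine ⟨?_, ?_⟩
    · rw [Units.val_mul]; exact hu.1.mul hv.1
    · rw [mul_inv_rev, Units.val_mul]; exact hv.2.mul hu.2
  one_mem' := by simpa using supportedOnPowers_one x
  inv_mem' hu := by simpa using hu.symm

end NCSeries

namespace Monoid.CoprodI.Word

open NCSeries

variable {X : Type*} {M : X → Type*} [∀ i, Monoid (M i)]

/-- The prefix `p` makes the induction go through: since its last letter differs from the first
index of `w`, the first syllable of `w` cannot absorb any of it. -/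
theorem map_prod_apply_append (φ : CoprodI M →* NCSeries X)
    (hφ : ∀ i (m : M i), SupportedOnPowers i (φ (of m)))
    (w : Word M) (p : List X) (hp : ∀ i ∈ w.fstIdx, p.getLast? ≠ some i) :
    φ w.prod (ofList (p ++ w.toList.map Sigma.fst)) =
      if p = [] then (w.toList.map fun l => φ (of l.2) (FreeMonoid.of l.1)).prod else 0 := by
  induction w using consRecOn generalizing p with
  | empty => simp [one_apply_ofList]
  | cons i m w hw hm ih =>
    have hwi : ∀ j ∈ w.fstIdx, some i ≠ some j := fun j hj h => hw (by rw [hj, h])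
    rw [prod_cons, map_mul, cons_toList, List.map_cons, List.map_cons, List.prod_cons,
      mul_apply_ofList]
    set u := w.toList.map Sigma.fst
    rcases p.eq_nil_or_concat with rfl | ⟨p, a, rfl⟩
    · rw [if_pos rfl, Finset.sum_eq_single 1]
      · simpa using congrArg (φ (of m) (FreeMonoid.of i) * ·) (ih [] (by simp))
      · intro k hk hk1
        rcases Nat.lt_or_gt_of_ne hk1 with hk0 | hk2
        · simpa [Nat.lt_one_iff.1 hk0] using Or.inr (ih [i] hwi)
        · obtain ⟨b, u', hu⟩ : ∃ b u', u = b :: u' :=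
            List.exists_cons_of_ne_nil (by rintro h; simp [h] at hk; omega)
          have hbi : b ≠ i := fun h => hw (by
            rw [fstIdx, ← List.head?_map, ← h]
            exact congrArg List.head? hu)
          obtain ⟨k, rfl⟩ : ∃ k', k = k' + 2 := ⟨k - 2, by omega⟩
          rw [(hφ i m).apply_eq_zero (y := b) (by simp [hu]) hbi, zero_mul]
      · simp
    · rw [List.concat_eq_append, if_neg (by simp)]
      have hai : a ≠ i := fun h => hp i (by simp) (by simp [h])
      refine Finset.sum_eq_zero fun k _ => ?_
      rcases lt_or_ge k (p ++ [a]).length with hk | hk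
      · have hdrop : (p ++ [a] ++ i :: u).drop k = ((p ++ [a]).drop k ++ [i]) ++ u := by
          rw [List.drop_append_of_le_length hk.le, List.append_assoc, List.singleton_append]
        rw [hdrop, ih _ (fun j hj => by simpa using hwi j hj), if_neg (by simp), mul_zero]
      · have ha : a ∈ (p ++ [a] ++ i :: u).take k := by
          rw [List.take_append, List.take_of_length_le hk]
          simp
        rw [(hφ i m).apply_eq_zero ha hai, zero_mul]

end Monoid.CoprodI.Word

namespace Monoid.CoprodI

open NCSeries

variable {X : Type*} {M : X → Type*} [∀ i, Group (M i)]

theorem injective_of_supportedOnPowers (φ : CoprodI M →* (NCSeries X)ˣ)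
    (hsupp : ∀ i (m : M i), SupportedOnPowers i (φ (of m)))
    (hlin : ∀ i (m : M i), m ≠ 1 → (φ (of m) : NCSeries X) (FreeMonoid.of i) ≠ 0) :
    Function.Injective φ := by
  classical
  refine (injective_iff_map_eq_one φ).2 fun g hg => ?_
  obtain ⟨w, rfl⟩ : ∃ w : Word M, w.prod = g := ⟨Word.equiv g, Word.equiv.symm_apply_apply g⟩
  by_contra hne
  have hw : w.toList ≠ [] := fun h => hne (by simp [Word.prod, h])
  have hcoeff := Word.map_prod_apply_append ((Units.coeHom _).comp φ) hsupp w [] (by simp)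
  rw [MonoidHom.comp_apply, hg, Units.coeHom_apply, Units.val_one, List.nil_append,
    one_apply_ofList, if_neg (by simpa using hw), if_pos rfl] at hcoeff
  refine List.prod_ne_zero ?_ hcoeff.symm
  simp only [List.mem_map, not_exists, not_and]
  exact fun l hl h => hlin l.1 l.2 (w.ne_one l hl) h

end Monoid.CoprodI

section Magnus

open NCSeries

variable {X : Type*}

def IsMagnusExpansion (f : FreeGroup X →* (NCSeries X)ˣ) : Prop :=
  ∀ x, (f (FreeGroup.of x) : NCSeries X) = 1 + Xvar x

namespace IsMagnusExpansion

variable {f : FreeGroup X →* (NCSeries X)ˣ}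

theorem apply_one_eq_one (hf : IsMagnusExpansion f) (w : FreeGroup X) :
    (f w : NCSeries X) 1 = 1 := by
  have h : (Units.map constantCoeff.toMonoidHom).comp f = 1 :=
    FreeGroup.ext_hom _ _ fun x => Units.ext <| by
      simp [constantCoeff_apply, hf x, Xvar, NCSeries.add_apply, one_apply]
  simpa [constantCoeff_apply] using congrArg Units.val (DFunLike.congr_fun h w)

theorem apply_of_zpow (hf : IsMagnusExpansion f) (x : X) (n : ℤ) :
    (f (FreeGroup.of x ^ n) : NCSeries X) (FreeMonoid.of x) = n := by
  let c : FreeGroup X →* Multiplicative ℤ :=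
    MonoidHom.mk' (fun w => .ofAdd ((f w : NCSeries X) (FreeMonoid.of x))) fun v w => by
      rw [map_mul, Units.val_mul, mul_apply_of, hf.apply_one_eq_one, hf.apply_one_eq_one]
      simp [add_comm]
  have hc : c (FreeGroup.of x) = .ofAdd 1 := by simp [c, hf x, NCSeries.add_apply, Xvar, one_apply]
  simpa [c, hc] using congrArg Multiplicative.toAdd (map_zpow c (FreeGroup.of x) n)

theorem supportedOnPowers_of_zpow (hf : IsMagnusExpansion f) (x : X) (n : ℤ) :
    SupportedOnPowers x (f (FreeGroup.of x ^ n)) := by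
  have hx : f (FreeGroup.of x) ∈ unitsSupportedOnPowers x := by
    refine ⟨hf x ▸ (supportedOnPowers_one x).add (supportedOnPowers_Xvar x), ?_⟩
    refine supportedOnPowers_of_one_add_Xvar_mul_eq_one ?_
    rw [← hf x, ← Units.val_mul, mul_inv_cancel, Units.val_one]
  rw [map_zpow]
  exact (zpow_mem hx n).1

theorem injective (hf : IsMagnusExpansion f) : Function.Injective f := by
  -- Reduced words of `CoprodI fun _ => FreeGroup Unit` are the syllable decompositions.
  let φ := f.comp (freeGroupEquivCoprodI (ι := X)).symm.toMonoidHom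
  have hφ : ∀ x (m : FreeGroup Unit), φ (Monoid.CoprodI.of (i := x) m) =
      f (FreeGroup.of x ^ FreeGroup.freeGroupUnitEquivInt m) := by
    intro x m
    conv_lhs => rw [← FreeGroup.freeGroupUnitEquivInt.symm_apply_apply m]
    simp [φ, FreeGroup.freeGroupUnitEquivInt]
  have hinj : Function.Injective φ := by
    refine Monoid.CoprodI.injective_of_supportedOnPowers φ
      (fun x m => hφ x m ▸ hf.supportedOnPowers_of_zpow x _) fun x m hm => ?_
    rw [hφ, hf.apply_of_zpow]
    refine fun h => hm ?_
    rw [← FreeGroup.freeGroupUnitEquivInt.symm_apply_apply m, h]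
    simp [FreeGroup.freeGroupUnitEquivInt]
  have : f = φ.comp (freeGroupEquivCoprodI (ι := X)).toMonoidHom := by ext; simp [φ]
  rw [this]
  exact hinj.comp (MulEquiv.injective _)

end IsMagnusExpansion

end Magnus

section Shortlex

variable {X : Type*} (r : X → X → Prop)

theorem shortlex_eq_invImage : shortlex r = InvImage (List.Shortlex r) FreeMonoid.toList := by
  ext u v
  exact List.shortlex_def.symm

theorem wellFounded_shortlex {r : X → X → Prop} (hr : WellFounded r) :
    WellFounded (shortlex r) := by
  rw [shortlex_eq_invImage]
  exact InvImage.wf _ (List.Shortlex.wf hr)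

instance [IsStrictTotalOrder X r] : IsStrictTotalOrder (FreeMonoid X) (shortlex r) where
  trichotomous u v h₁ h₂ := by
    rw [shortlex_eq_invImage] at h₁ h₂
    exact FreeMonoid.toList.injective
      (Std.Trichotomous.trichotomous (r := List.Shortlex r) _ _ h₁ h₂)
  irrefl u h := by
    rcases h with h | ⟨-, h⟩
    · exact lt_irrefl _ h
    · exact List.lex_irrefl (irrefl_of r) _ h
  trans u v w h₁ h₂ := by
    rcases h₁ with h₁ | ⟨e₁, h₁⟩ <;> rcases h₂ with h₂ | ⟨e₂, h₂⟩
    · exact Or.inl (h₁.trans h₂)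
    · exact Or.inl (e₂ ▸ h₁)
    · exact Or.inl (e₁ ▸ h₂)
    · exact Or.inr ⟨e₁.trans e₂, List.lex_trans (trans_of r) h₁ h₂⟩

end Shortlex

theorem Pi.isStrictTotalOrder_lex {ι : Type*} {β : ι → Type*} {r : ι → ι → Prop}
    [IsStrictTotalOrder ι r] (hr : WellFounded r) [∀ i, LinearOrder (β i)] :
    IsStrictTotalOrder (∀ i, β i) (Pi.Lex r (· < ·)) where
  trichotomous := (Pi.trichotomous_lex r _ hr).trichotomous
  irrefl _ := fun ⟨_, _, h⟩ => lt_irrefl _ h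
  trans := by
    rintro a b c ⟨i, hab, hi⟩ ⟨j, hbc, hj⟩
    rcases trichotomous_of r i j with hij | rfl | hji
    · exact ⟨i, fun k hk => (hab k hk).trans (hbc k (trans_of r hk hij)), hbc i hij ▸ hi⟩
    · exact ⟨i, fun k hk => (hab k hk).trans (hbc k hk), hi.trans hj⟩
    · exact ⟨j, fun k hk => (hab k (trans_of r hk hji)).trans (hbc k hk), (hab j hji).symm ▸ hj⟩

section MagnusOrder

open NCSeries

variable {X : Type*} {r : X → X → Prop} {f : FreeGroup X →* (NCSeries X)ˣ}

theorem magnusLt_eq_invImage :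
    magnusLt r f = InvImage (Pi.Lex (β := fun _ => ℤ) (shortlex r) (· < ·))
      fun a => (f a : NCSeries X) := by
  funext a b
  exact propext (exists_congr fun _ => and_comm)

theorem IsMagnusExpansion.isStrictTotalOrder_magnusLt [IsStrictTotalOrder X r]
    (hr : WellFounded r) (hf : IsMagnusExpansion f) :
    IsStrictTotalOrder (FreeGroup X) (magnusLt r f) := by
  have : IsStrictTotalOrder (NCSeries X) (Pi.Lex (shortlex r) (· < ·)) :=
    Pi.isStrictTotalOrder_lex (wellFounded_shortlex hr)
  rw [magnusLt_eq_invImage]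
  exact (Units.val_injective.comp hf.injective).isStrictTotalOrder_onFun _

theorem IsMagnusExpansion.magnusLt_mul_mul (hf : IsMagnusExpansion f) {x y : FreeGroup X}
    (h : magnusLt r f x y) (g k : FreeGroup X) : magnusLt r f (g * x * k) (g * y * k) := by
  obtain ⟨m, hlt, heq⟩ := h
  have hd : ∀ b : FreeMonoid X, (toList b).length < (toList m).length →
      ((f y : NCSeries X) - f x) b = 0 := fun b hb => by
    rw [NCSeries.sub_apply, heq b (Or.inl hb), sub_self]
  have hsandwich : ∀ m' : FreeMonoid X, (toList m').length ≤ (toList m).length →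
      (f (g * y * k) : NCSeries X) m' - (f (g * x * k) : NCSeries X) m' =
        (f y : NCSeries X) m' - (f x : NCSeries X) m' := by
    intro m' hm'
    rw [← NCSeries.sub_apply, ← NCSeries.sub_apply, map_mul, map_mul, map_mul, map_mul,
      Units.val_mul, Units.val_mul, Units.val_mul, Units.val_mul, ← sub_mul, ← mul_sub,
      mul_mul_apply_of_forall_length_lt fun b hb => hd b (hb.trans_le hm'),
      hf.apply_one_eq_one, hf.apply_one_eq_one, one_mul, mul_one]
  refine ⟨m, ?_, fun m' hm' => ?_⟩
  · linarith [hsandwich m le_rfl]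
  · have hm'len : (toList m').length ≤ (toList m).length := by
      rcases hm' with h | ⟨h, -⟩ <;> omega
    linarith [hsandwich m' hm'len, heq m' hm']

end MagnusOrder

/-- The free group of countably infinite rank is bi-orderable: the Magnus ordering is a
strict total order on `F_∞` invariant under left and right multiplication. -/
theorem freeGroup_magnus_biOrderable (f : FreeGroup ℕ →* (NCSeries ℕ)ˣ)
    (hf : ∀ n : ℕ, ((f (FreeGroup.of n) : (NCSeries ℕ)ˣ) : NCSeries ℕ) = 1 + NCSeries.Xvar n) :
    IsStrictTotalOrder (FreeGroup ℕ) (magnusLt (· < ·) f) ∧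
    ∀ g h x y : FreeGroup ℕ,
      magnusLt (· < ·) f x y → magnusLt (· < ·) f (g * x * h) (g * y * h) :=
  ⟨IsMagnusExpansion.isStrictTotalOrder_magnusLt wellFounded_lt hf,
    fun g h _ _ hxy => IsMagnusExpansion.magnusLt_mul_mul hf hxy g h⟩
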